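/- arXiv:1609.05490 — 2 statements merged into one kernel-verified Lean document; each statement's English description precedes it below -/
import Mathlib

section
/- (Theorem 1, single receive antenna, Eisenstein integers.) Let P > 0, h ∈ ℂ^L, M = (1 + P‖h‖²)·I_L − P·h^H h, and suppose a is a nonzero Eisenstein integer vector in ℂ^L that minimizes the quadratic form a' M (a')^H over all nonzero Eisenstein integer vectors a' ∈ ℂ^L. Then either a is a unit vector in ℤ[ω]^L, or, setting α = P·⟨a,h⟩/(1 + P‖h‖²), for every index l the component a_l is a nearest Eisenstein integer to α·h_l. -/
open Complex Finset Matrix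

/-- The primitive sixth root of unity `ω = −1/2 + i√3/2`. -/
noncomputable def eisω : ℂ := -(1 / 2) + ((Real.sqrt 3 / 2 : ℝ) : ℂ) * Complex.I

/-- `z ∈ ℂ` is an Eisenstein integer. -/
def IsEisInt (z : ℂ) : Prop := ∃ m n : ℤ, z = (m : ℂ) + (n : ℂ) * eisω

/-- `a ∈ ℂ^L` is an Eisenstein integer vector. -/
def IsEisVec {L : ℕ} (a : Fin L → ℂ) : Prop := ∀ l, IsEisInt (a l)

/-- `a` is a unit vector in `ℤ[ω]^L`: exactly one nonzero component, equal to a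
unit `±1, ±ω, ±ω²` of the Eisenstein integers. -/
def IsEisUnitVec {L : ℕ} (a : Fin L → ℂ) : Prop :=
  ∃ l₀ : Fin L,
    (a l₀ = 1 ∨ a l₀ = -1 ∨ a l₀ = eisω ∨ a l₀ = -eisω ∨
      a l₀ = eisω ^ 2 ∨ a l₀ = -eisω ^ 2) ∧
    ∀ l, l ≠ l₀ → a l = 0

/-- `e` is a nearest Eisenstein integer to `x`. -/
def IsNearestEis (x e : ℂ) : Prop :=
  IsEisInt e ∧ ∀ e' : ℂ, IsEisInt e' → ‖x - e‖ ≤ ‖x - e'‖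

/-!
Write `β = 1 + P‖h‖²`, `f(x) = x M xᴴ = β‖x‖² - P|⟨x,h⟩|²` and `α = P⟨a,h⟩/β`. Completing the
square gives, for all `a, b`,
`f(b) - f(a) + P|⟨b - a, h⟩|² = β (‖b - αh‖² - ‖a - αh‖²)`,
so any `b` strictly closer to `αh` than `a` has `f(b) < f(a)`. If some coordinate `a_l` is not a
nearest Eisenstein integer to `αh_l`, replacing it by a nearer one gives such a `b`, which
contradicts minimality unless `b = 0`. In that case `a = a_l e_l`, and comparing with `e_l`
through `f(c x) = |c|² f(x)` and `f(x) ≥ ‖x‖² > 0` forces `|a_l| ≤ 1`, i.e. `a_l` is a unit.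
-/

open scoped ComplexConjugate

section CFQuadForm

variable {𝕜 E : Type*} [RCLike 𝕜] [NormedAddCommGroup E] [InnerProductSpace 𝕜 E]

local notation "⟪" x ", " y "⟫" => inner 𝕜 x y

variable (𝕜) in
/-- The quadratic form `x ↦ x M xᴴ` of `M = (1 + P‖h‖²) I - P hᴴh`. -/
noncomputable def cfQuadForm (P : ℝ) (h x : E) : ℝ :=
  (1 + P * ‖h‖ ^ 2) * ‖x‖ ^ 2 - P * ‖⟪h, x⟫‖ ^ 2

theorem cfQuadForm_smul (P : ℝ) (h x : E) (c : 𝕜) :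
    cfQuadForm 𝕜 P h (c • x) = ‖c‖ ^ 2 * cfQuadForm 𝕜 P h x := by
  simp only [cfQuadForm, norm_smul, inner_smul_right, norm_mul]
  ring

theorem sq_norm_le_cfQuadForm {P : ℝ} (hP : 0 ≤ P) (h x : E) :
    ‖x‖ ^ 2 ≤ cfQuadForm 𝕜 P h x := by
  have hCS : ‖⟪h, x⟫‖ ^ 2 ≤ ‖h‖ ^ 2 * ‖x‖ ^ 2 := by
    rw [← mul_pow]
    exact pow_le_pow_left₀ (norm_nonneg _) (norm_inner_le_norm h x) 2
  unfold cfQuadForm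
  nlinarith [mul_le_mul_of_nonneg_left hCS hP]

theorem cfQuadForm_sub_cfQuadForm_add {P : ℝ} (h a b : E) {α : 𝕜}
    (hα : ((1 + P * ‖h‖ ^ 2 : ℝ) : 𝕜) * α = P * ⟪h, a⟫) :
    cfQuadForm 𝕜 P h b - cfQuadForm 𝕜 P h a + P * ‖⟪h, b - a⟫‖ ^ 2 =
      (1 + P * ‖h‖ ^ 2) * (‖b - α • h‖ ^ 2 - ‖a - α • h‖ ^ 2) := by
  have key : ∀ x : E,
      (1 + P * ‖h‖ ^ 2) * RCLike.re ⟪x, α • h⟫ = P * RCLike.re (⟪h, a⟫ * conj ⟪h, x⟫) := by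
    intro x
    rw [inner_smul_right, ← RCLike.re_ofReal_mul, ← mul_assoc, hα, mul_assoc,
      RCLike.re_ofReal_mul, inner_conj_symm]
  have ha := key a
  rw [RCLike.mul_conj, ← RCLike.ofReal_pow, RCLike.ofReal_re] at ha
  have hsub : ‖⟪h, b - a⟫‖ ^ 2 =
      ‖⟪h, b⟫‖ ^ 2 - 2 * RCLike.re (⟪h, a⟫ * conj ⟪h, b⟫) + ‖⟪h, a⟫‖ ^ 2 := by
    rw [inner_sub_right, norm_sub_sq (𝕜 := 𝕜) (E := 𝕜), RCLike.inner_apply, ← RCLike.conj_re, map_mul,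
      RCLike.conj_conj]
  unfold cfQuadForm
  rw [norm_sub_sq (𝕜 := 𝕜) b, norm_sub_sq (𝕜 := 𝕜) a, hsub]
  linear_combination (2 : ℝ) * key b - 2 * ha

theorem cfQuadForm_lt_of_norm_sub_lt {P : ℝ} (hP : 0 ≤ P) {h a b : E} {α : 𝕜}
    (hα : ((1 + P * ‖h‖ ^ 2 : ℝ) : 𝕜) * α = P * ⟪h, a⟫)
    (hlt : ‖b - α • h‖ < ‖a - α • h‖) :
    cfQuadForm 𝕜 P h b < cfQuadForm 𝕜 P h a := by
  have hβ : 0 < 1 + P * ‖h‖ ^ 2 := by positivity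
  have hsq : ‖b - α • h‖ ^ 2 < ‖a - α • h‖ ^ 2 := by gcongr
  have := cfQuadForm_sub_cfQuadForm_add h a b hα
  nlinarith [mul_lt_mul_of_pos_left hsq hβ, mul_nonneg hP (sq_nonneg ‖⟪h, b - a⟫‖)]

theorem norm_le_one_of_cfQuadForm_smul_le {P : ℝ} (hP : 0 ≤ P) {h x : E} (hx : x ≠ 0) {c : 𝕜}
    (hle : cfQuadForm 𝕜 P h (c • x) ≤ cfQuadForm 𝕜 P h x) :
    ‖c‖ ≤ 1 := by
  have hpos : 0 < cfQuadForm 𝕜 P h x :=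
    (pow_pos (norm_pos_iff.mpr hx) 2).trans_le (sq_norm_le_cfQuadForm hP h x)
  rw [cfQuadForm_smul] at hle
  rw [← sq_le_one_iff₀ (norm_nonneg c)]
  nlinarith

end CFQuadForm

theorem re_sum_mul_mul_conj_eq_cfQuadForm {ι : Type*} [Fintype ι] [DecidableEq ι] (P : ℝ)
    (h x : ι → ℂ) :
    (∑ m, ∑ n, x m * ((1 + P * ∑ l, ‖h l‖ ^ 2) • (1 : Matrix ι ι ℂ)
        - P • Matrix.of (fun m n => conj (h m) * h n)) m n * conj (x n)).re =
      cfQuadForm ℂ P (WithLp.toLp 2 h) (WithLp.toLp 2 x) := by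
  set β : ℝ := 1 + P * ∑ l, ‖h l‖ ^ 2
  set s := ∑ i, x i * conj (h i)
  have hterm : ∀ m n, x m * (β • (1 : Matrix ι ι ℂ)
      - P • Matrix.of (fun m n => conj (h m) * h n)) m n * conj (x n) =
        β * (if m = n then x m * conj (x m) else 0)
          - P * ((x m * conj (h m)) * conj (x n * conj (h n))) := by
    intro m n
    by_cases hmn : m = n
    · subst hmn; simp [one_apply]; ring
    · simp [one_apply, hmn]; ring
  have hsum : ∑ m, ∑ n, x m * (β • (1 : Matrix ι ι ℂ)
      - P • Matrix.of (fun m n => conj (h m) * h n)) m n * conj (x n) =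
        ((β * ∑ m, ‖x m‖ ^ 2 - P * ‖s‖ ^ 2 : ℝ) : ℂ) := by
    simp only [hterm, Finset.sum_sub_distrib, ← Finset.mul_sum, Finset.sum_ite_eq,
      Finset.mem_univ, if_true, ← map_sum, ← Finset.sum_mul]
    push_cast [Complex.mul_conj']
    rfl
  rw [hsum, ofReal_re, cfQuadForm, EuclideanSpace.inner_toLp_toLp]
  simp [EuclideanSpace.norm_sq_eq, β, s, dotProduct]

theorem EuclideanSpace.norm_toLp_update_sub_lt {𝕜 ι : Type*} [RCLike 𝕜] [Fintype ι]
    [DecidableEq ι] (a : ι → 𝕜) (c : EuclideanSpace 𝕜 ι) {l : ι} {e : 𝕜}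
    (he : ‖e - c l‖ < ‖a l - c l‖) :
    ‖WithLp.toLp 2 (Function.update a l e) - c‖ < ‖WithLp.toLp 2 a - c‖ := by
  simp only [EuclideanSpace.norm_eq, PiLp.sub_apply]
  refine Real.sqrt_lt_sqrt (by positivity) ?_
  have hl : ‖e - c l‖ ^ 2 < ‖a l - c l‖ ^ 2 := by gcongr
  refine Finset.sum_lt_sum (fun i _ => ?_) ⟨l, Finset.mem_univ l, by simpa using hl⟩
  rcases eq_or_ne i l with rfl | hi
  · simpa using hl.le
  · simp [Function.update_of_ne hi]

lemma eisω_sq : eisω ^ 2 = -1 - eisω := by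
  have h3 : ((Real.sqrt 3 : ℝ) : ℂ) ^ 2 = 3 := by
    rw [← Complex.ofReal_pow, Real.sq_sqrt] <;> norm_num
  unfold eisω; push_cast
  linear_combination (Complex.I ^ 2 / 4) * h3 + (3 / 4 : ℂ) * Complex.I_sq

lemma normSq_intCast_add_intCast_mul_eisω (m n : ℤ) :
    Complex.normSq ((m : ℂ) + (n : ℂ) * eisω) = (m : ℝ) ^ 2 - m * n + n ^ 2 := by
  have h3 : Real.sqrt 3 ^ 2 = 3 := Real.sq_sqrt (by norm_num)
  simp [Complex.normSq_apply, eisω]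
  linear_combination (n : ℝ) ^ 2 / 4 * h3

lemma isEisInt_zero : IsEisInt 0 := ⟨0, 0, by simp⟩

lemma isEisInt_one : IsEisInt 1 := ⟨1, 0, by simp⟩

lemma IsEisVec.update {L : ℕ} {a : Fin L → ℂ} (ha : IsEisVec a) (l : Fin L) {e : ℂ}
    (he : IsEisInt e) : IsEisVec (Function.update a l e) := by
  intro i
  rcases eq_or_ne i l with rfl | hi
  · simpa using he
  · simpa [Function.update_of_ne hi] using ha i

lemma IsEisInt.eq_unit_of_norm_le_one {z : ℂ} (hz : IsEisInt z) (h0 : z ≠ 0) (h1 : ‖z‖ ≤ 1) :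
    z = 1 ∨ z = -1 ∨ z = eisω ∨ z = -eisω ∨ z = eisω ^ 2 ∨ z = -eisω ^ 2 := by
  obtain ⟨m, n, rfl⟩ := hz
  have hnorm : m ^ 2 - m * n + n ^ 2 ≤ 1 := by
    have hsq : ((m ^ 2 - m * n + n ^ 2 : ℤ) : ℝ) ≤ 1 := by
      rw [Int.cast_add, Int.cast_sub, Int.cast_mul, Int.cast_pow, Int.cast_pow,
        ← normSq_intCast_add_intCast_mul_eisω, Complex.normSq_eq_norm_sq]
      exact pow_le_one₀ (norm_nonneg _) h1
    exact_mod_cast hsq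
  have hm : m ^ 2 ≤ 1 := by nlinarith
  have hn : n ^ 2 ≤ 1 := by nlinarith
  obtain ⟨hm₁, hm₂⟩ := abs_le.mp (sq_le_one_iff_abs_le_one m |>.mp hm)
  obtain ⟨hn₁, hn₂⟩ := abs_le.mp (sq_le_one_iff_abs_le_one n |>.mp hn)
  interval_cases m <;> interval_cases n <;>
    first
      | (exfalso; norm_num at hnorm; done)
      | (exfalso; norm_num at h0; done)
      | (left; norm_num; done)
      | (right; left; norm_num; done)
      | (right; right; left; norm_num; done)
      | (right; right; right; left; norm_num; done)
      | (right; right; right; right; left; linear_combination -eisω_sq)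
      | (right; right; right; right; right; linear_combination eisω_sq)

section Minimizer

variable {L : ℕ} {P : ℝ} (hP : 0 ≤ P) {h a : Fin L → ℂ}
  (hmin : ∀ b : Fin L → ℂ, IsEisVec b → b ≠ 0 →
    cfQuadForm ℂ P (WithLp.toLp 2 h) (WithLp.toLp 2 a) ≤
      cfQuadForm ℂ P (WithLp.toLp 2 h) (WithLp.toLp 2 b))
include hP hmin

theorem isEisUnitVec_of_forall_ne_eq_zero (ha : IsEisVec a) (ha0 : a ≠ 0) {l : Fin L}
    (hsupp : ∀ i, i ≠ l → a i = 0) : IsEisUnitVec a := by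
  have hal : a l ≠ 0 := fun h0 => ha0 (funext fun i => by
    rcases eq_or_ne i l with rfl | hi
    exacts [h0, hsupp i hi])
  have hunit : IsEisVec (Pi.single l 1 : Fin L → ℂ) := by
    intro i
    rw [Pi.single_apply]
    split_ifs
    exacts [isEisInt_one, isEisInt_zero]
  have hsmul : WithLp.toLp 2 a = a l • WithLp.toLp 2 (Pi.single l 1 : Fin L → ℂ) := by
    ext i
    rcases eq_or_ne i l with rfl | hi
    · simp
    · simp [hsupp i hi, hi]
  have hle := hmin _ hunit (by simp)
  rw [hsmul] at hle
  have h1 := norm_le_one_of_cfQuadForm_smul_le hP (by simp) hle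
  exact ⟨l, (ha l).eq_unit_of_norm_le_one hal h1, hsupp⟩

theorem norm_sub_le_of_update_ne_zero {α : ℂ}
    (hα : ((1 + P * ‖WithLp.toLp 2 h‖ ^ 2 : ℝ) : ℂ) * α =
      P * inner ℂ (WithLp.toLp 2 h) (WithLp.toLp 2 a))
    (ha : IsEisVec a) (l : Fin L) {e : ℂ} (he : IsEisInt e) (hb : Function.update a l e ≠ 0) :
    ‖α * h l - a l‖ ≤ ‖α * h l - e‖ := by
  refine le_of_not_gt fun hlt => (hmin _ (ha.update l he) hb).not_gt ?_
  refine cfQuadForm_lt_of_norm_sub_lt hP hα (EuclideanSpace.norm_toLp_update_sub_lt a _ ?_)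
  simpa [norm_sub_rev] using hlt

end Minimizer

/-- Theorem 1 (single receive antenna, Eisenstein integers): any nonzero Eisenstein
integer vector minimizing the quadratic form `a M aᴴ` with
`M = (1 + P‖h‖²)·I − P·hᴴh` is either a unit vector of `ℤ[ω]^L`, or satisfies
`a = [α·h]_{ℤ[ω]}` componentwise, where `α = P⟨a,h⟩/(1 + P‖h‖²)`. -/
theorem cf_opt_coeff_eisenstein (L : ℕ) (P : ℝ) (hP : 0 < P) (h : Fin L → ℂ)
    (M : Matrix (Fin L) (Fin L) ℂ)
    (hM : M = (1 + P * ∑ l, ‖h l‖ ^ 2) • (1 : Matrix (Fin L) (Fin L) ℂ)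
        - P • Matrix.of (fun m n => (starRingEnd ℂ) (h m) * h n))
    (a : Fin L → ℂ) (ha : IsEisVec a) (ha0 : a ≠ 0)
    (hmin : ∀ a' : Fin L → ℂ, IsEisVec a' → a' ≠ 0 →
      Complex.re (∑ m, ∑ n, a m * M m n * (starRingEnd ℂ) (a n)) ≤
        Complex.re (∑ m, ∑ n, a' m * M m n * (starRingEnd ℂ) (a' n))) :
    IsEisUnitVec a ∨
      (∀ l : Fin L,
        IsNearestEis
          (((P : ℂ) * (∑ l', a l' * (starRingEnd ℂ) (h l')) /
              (1 + (P : ℂ) * ((∑ l', ‖h l'‖ ^ 2 : ℝ) : ℂ))) * h l)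
          (a l)) := by
  subst hM
  simp only [re_sum_mul_mul_conj_eq_cfQuadForm] at hmin
  by_cases hu : IsEisUnitVec a
  · exact .inl hu
  refine .inr fun l => ⟨ha l, fun e he => ?_⟩
  have hb : Function.update a l e ≠ 0 := fun hb =>
    hu (isEisUnitVec_of_forall_ne_eq_zero hP.le hmin ha ha0 (Function.update_eq_iff.mp hb).2)
  refine norm_sub_le_of_update_ne_zero hP.le hmin ?_ ha l he hb
  have hβ : (1 + (P : ℂ) * ((∑ l', ‖h l'‖ ^ 2 : ℝ) : ℂ)) ≠ 0 := by
    exact_mod_cast (by positivity : (1 + P * ∑ l', ‖h l'‖ ^ 2 : ℝ) ≠ 0)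
  simp only [EuclideanSpace.norm_sq_eq, EuclideanSpace.inner_toLp_toLp,
    dotProduct, Pi.star_apply, RCLike.star_def]
  push_cast at hβ ⊢
  field_simp
end

section
/- (Theorem 1, MIMO compute-and-forward, Gaussian integers.) Let P > 0 and let H be a k×L complex matrix. Suppose b ∈ ℂ^k and a is a nonzero Gaussian integer vector in ℂ^L such that ‖b‖² + P·‖bH − a‖² ≤ ‖b'‖² + P·‖b'H − a'‖² for every b' ∈ ℂ^k and every nonzero Gaussian integer vector a' ∈ ℂ^L. Then either a is a unit vector in ℤ[i]^L, or for every index l the component a_l is a nearest Gaussian integer to (bH)_l. -/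
open Complex Finset Matrix

/-- `z ∈ ℂ` is a Gaussian integer. -/
def IsGaussInt (z : ℂ) : Prop := ∃ m n : ℤ, z = (m : ℂ) + (n : ℂ) * Complex.I

/-- `a ∈ ℂ^L` is a Gaussian integer vector. -/
def IsGaussVec {L : ℕ} (a : Fin L → ℂ) : Prop := ∀ l, IsGaussInt (a l)

/-- `a` is a unit vector in `ℤ[i]^L`: exactly one nonzero component, equal to a
unit `1, -1, i, -i` of the Gaussian integers. -/
def IsGaussUnitVec {L : ℕ} (a : Fin L → ℂ) : Prop :=
  ∃ l₀ : Fin L, (a l₀ = 1 ∨ a l₀ = -1 ∨ a l₀ = Complex.I ∨ a l₀ = -Complex.I) ∧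
    ∀ l, l ≠ l₀ → a l = 0

/-- `g` is a nearest Gaussian integer to `x`. -/
def IsNearestGauss (x g : ℂ) : Prop :=
  IsGaussInt g ∧ ∀ g' : ℂ, IsGaussInt g' → ‖x - g‖ ≤ ‖x - g'‖

/-!
Keep `b` fixed and change `a` in one coordinate `l` only: optimality of `(b, a)` says that
`a l` is at least as close to `(bH)_l` as every Gaussian integer `c` for which the modified
vector stays nonzero. This leaves only the comparison with `c = 0` when `a` is supported on
`{l}`. If `a` is then not a unit vector, `|a l|² ≥ 2`, and being at least as close to `(bH)_l`
as the four units forces `a l` to be at least as close as `0` too.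
-/

lemma norm_sub_le_of_sum_sq_le_update {ι E : Type*} [Fintype ι] [DecidableEq ι]
    [SeminormedAddCommGroup E] {v a : ι → E} {l : ι} {c : E}
    (h : ∑ i, ‖v i - a i‖ ^ 2 ≤ ∑ i, ‖v i - Function.update a l c i‖ ^ 2) :
    ‖v l - a l‖ ≤ ‖v l - c‖ := by
  have hrest : ∑ i ∈ univ.erase l, ‖v i - Function.update a l c i‖ ^ 2 =
      ∑ i ∈ univ.erase l, ‖v i - a i‖ ^ 2 :=
    sum_congr rfl fun i hi => by rw [Function.update_of_ne (ne_of_mem_erase hi)]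
  rw [← add_sum_erase _ _ (mem_univ l), ← add_sum_erase _ _ (mem_univ l), hrest,
    Function.update_self, add_le_add_iff_right] at h
  exact (pow_le_pow_iff_left₀ (norm_nonneg _) (norm_nonneg _) two_ne_zero).mp h

lemma IsGaussVec.update {L : ℕ} {a : Fin L → ℂ} (ha : IsGaussVec a) (l : Fin L) {c : ℂ}
    (hc : IsGaussInt c) : IsGaussVec (Function.update a l c) := by
  intro j
  by_cases hj : j = l
  · subst hj; simpa using hc
  · simpa [Function.update_of_ne hj] using ha j

lemma IsGaussInt.two_le_normSq {w : ℂ} (hw : IsGaussInt w) (h0 : w ≠ 0)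
    (hunit : ¬(w = 1 ∨ w = -1 ∨ w = Complex.I ∨ w = -Complex.I)) : 2 ≤ normSq w := by
  obtain ⟨m, n, rfl⟩ := hw
  have hnorm : normSq ((m : ℂ) + n * Complex.I) = ((m ^ 2 + n ^ 2 : ℤ) : ℝ) := by
    simp [normSq_apply]; ring
  rw [hnorm]
  by_contra! hlt
  have hlt' : m ^ 2 + n ^ 2 < 2 := by exact_mod_cast hlt
  obtain ⟨hm₁, hm₂⟩ := abs_le.mp ((sq_le_one_iff_abs_le_one m).mp (by nlinarith [sq_nonneg n]))
  obtain ⟨hn₁, hn₂⟩ := abs_le.mp ((sq_le_one_iff_abs_le_one n).mp (by nlinarith [sq_nonneg m]))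
  interval_cases m <;> interval_cases n <;> simp_all

/-- With `K = |x - w|² - |x|²`, comparing with `±1` and `±i` gives `2|x.re|, 2|x.im| ≤ 1 - K`,
so `|w|² - K = 2 Re (x w̄) ≤ (1 - K)(|w.re| + |w.im|) ≤ (1 - K)|w|²`, i.e. `K (|w|² - 1) ≤ 0`. -/
lemma norm_sub_le_norm_of_le_norm_sub_units {x w : ℂ} (hw : 2 ≤ normSq w)
    (h₁ : ‖x - w‖ ≤ ‖x - 1‖) (h₂ : ‖x - w‖ ≤ ‖x - -1‖)
    (h₃ : ‖x - w‖ ≤ ‖x - Complex.I‖) (h₄ : ‖x - w‖ ≤ ‖x - -Complex.I‖) :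
    ‖x - w‖ ≤ ‖x‖ := by
  have hsq : ∀ z z' : ℂ, ‖z‖ ≤ ‖z'‖ ↔ normSq z ≤ normSq z' := fun z z' => by
    rw [← Complex.sq_norm, ← Complex.sq_norm,
      pow_le_pow_iff_left₀ (norm_nonneg _) (norm_nonneg _) two_ne_zero]
  obtain ⟨A, B⟩ := x
  obtain ⟨c, d⟩ := w
  simp only [hsq, normSq_apply, sub_re, sub_im, neg_re, neg_im, one_re, one_im, I_re, I_im,
    sub_zero, neg_zero] at hw h₁ h₂ h₃ h₄ ⊢
  set K := c ^ 2 + d ^ 2 - 2 * (A * c + B * d)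
  have hA : 2 * |A| ≤ 1 - K := by
    rw [← abs_two, ← abs_mul]; exact abs_le.mpr ⟨by nlinarith, by nlinarith⟩
  have hB : 2 * |B| ≤ 1 - K := by
    rw [← abs_two, ← abs_mul]; exact abs_le.mpr ⟨by nlinarith, by nlinarith⟩
  have hcd : |c| + |d| ≤ c ^ 2 + d ^ 2 := by
    nlinarith [sq_abs c, sq_abs d, sq_nonneg (|c| - |d|), abs_nonneg c, abs_nonneg d]
  have hcross : 2 * (A * c + B * d) ≤ (1 - K) * (|c| + |d|) := by
    have hAc := mul_le_mul_of_nonneg_right hA (abs_nonneg c)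
    have hBd := mul_le_mul_of_nonneg_right hB (abs_nonneg d)
    have hAc' : A * c ≤ |A| * |c| := abs_mul A c ▸ le_abs_self _
    have hBd' : B * d ≤ |B| * |d| := abs_mul B d ▸ le_abs_self _
    linarith
  have hK : K ≤ 0 := by
    nlinarith [mul_le_mul_of_nonneg_left hcd (show 0 ≤ 1 - K by linarith [abs_nonneg A])]
  nlinarith

/-- Theorem 1 (MIMO compute-and-forward, Gaussian integers): if `(b, a)` minimizes
`‖b‖² + P‖bH − a‖²` over all `b' ∈ ℂ^k` and all nonzero Gaussian integer vectors
`a' ∈ ℂ^L`, then either `a` is a unit vector in `ℤ[i]^L`, or `a = [bH]`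
componentwise. -/
theorem mimo_cf_opt_coeff_gaussian (k L : ℕ) (P : ℝ) (hP : 0 < P)
    (H : Matrix (Fin k) (Fin L) ℂ) (b : Fin k → ℂ)
    (a : Fin L → ℂ) (ha : IsGaussVec a) (ha0 : a ≠ 0)
    (hmin : ∀ (b' : Fin k → ℂ) (a' : Fin L → ℂ), IsGaussVec a' → a' ≠ 0 →
      (∑ j, ‖b j‖ ^ 2) +
          P * ∑ l, ‖Matrix.vecMul b H l - a l‖ ^ 2 ≤
        (∑ j, ‖b' j‖ ^ 2) +
          P * ∑ l, ‖Matrix.vecMul b' H l - a' l‖ ^ 2) :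
    IsGaussUnitVec a ∨
      (∀ l : Fin L, IsNearestGauss (Matrix.vecMul b H l) (a l)) := by
  have hcoord : ∀ l c, IsGaussInt c → Function.update a l c ≠ 0 →
      ‖vecMul b H l - a l‖ ≤ ‖vecMul b H l - c‖ := fun l c hc hne =>
    norm_sub_le_of_sum_sq_le_update <| le_of_mul_le_mul_left
      (le_of_add_le_add_left (hmin b _ (ha.update l hc) hne)) hP
  by_cases hu : IsGaussUnitVec a
  · exact .inl hu
  refine .inr fun l => ⟨ha l, fun g hg => ?_⟩
  by_cases hzero : Function.update a l g = 0
  swap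
  · exact hcoord l g hg hzero
  obtain ⟨rfl, hsupp⟩ := Function.update_eq_iff.mp hzero
  have hupd : ∀ c : ℂ, c ≠ 0 → Function.update a l c ≠ 0 := fun c hc h =>
    hc (Function.update_eq_iff.mp h).1
  have hal : a l ≠ 0 := fun h => ha0 (by rw [← Function.update_eq_self l a, h]; exact hzero)
  rw [Pi.zero_apply, sub_zero]
  exact norm_sub_le_norm_of_le_norm_sub_units
    ((ha l).two_le_normSq hal fun h => hu ⟨l, h, hsupp⟩)
    (hcoord l 1 ⟨1, 0, by simp⟩ (hupd 1 one_ne_zero))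
    (hcoord l (-1) ⟨-1, 0, by simp⟩ (hupd (-1) (neg_ne_zero.mpr one_ne_zero)))
    (hcoord l Complex.I ⟨0, 1, by simp⟩ (hupd _ I_ne_zero))
    (hcoord l (-Complex.I) ⟨0, -1, by simp⟩ (hupd _ (neg_ne_zero.mpr I_ne_zero)))
end
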